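/- Let q be a generalized path query containing at least one constant, with characteristic prefix charpref(q) = (p)_c for a constant-free word p and a constant c, and let q* = p·N be the extension of q by a fresh relation name N. If q satisfies D3 (for every decomposition charpref(q) = (u·R·v·R·w)_c there is a homomorphism from (u·R·v·R·w)_c to (u·R·v·R·v·R·w)_c), then: (i) for every decomposition p = u·R·v·R·w, the word u·R·v·R·w·N is a suffix of u·R·v·R·v·R·w·N (hence q* satisfies C3); and (ii) whenever p = u·R·v1·R·v2·R·w for consecutive occurrences of R, we have v1 = v2 (hence q* satisfies C2). -/
import Mathlib


/-- Condition C3: whenever `q = a·R·b·R·c`, `q` is a factor of `a·R·b·R·b·R·c`. -/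
def CondC3 {σ : Type*} (q : List σ) : Prop :=
  ∀ (a b c : List σ) (R : σ), q = a ++ [R] ++ b ++ [R] ++ c →
    q <:+: a ++ [R] ++ b ++ [R] ++ b ++ [R] ++ c

/-- Part (ii) of condition C2. -/
def CondC2ii {σ : Type*} (q : List σ) : Prop :=
  ∀ (a b1 b2 c : List σ) (R : σ),
    q = a ++ [R] ++ b1 ++ [R] ++ b2 ++ [R] ++ c → R ∉ b1 → R ∉ b2 →
    b1 = b2 ∨ ([R] ++ c) <+: ([R] ++ b1)

/-- Condition C2. -/
def CondC2 {σ : Type*} (q : List σ) : Prop := CondC3 q ∧ CondC2ii q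

lemma keyLemma18 {σ : Type*} {x a b y : List σ} {R : σ}
    (hpre : x <+: a ++ [R] ++ x) (hx : x = b ++ [R] ++ y)
    (hRa : R ∉ a) (hRb : R ∉ b) : a = b := by
  have hRx : R ∈ x := by simp [hx]
  have hbx : b.length < x.length := by simp [hx]
  have hax : a.length < x.length := by
    by_contra h
    push_neg at h
    have hxa : x <+: a :=
      List.prefix_of_prefix_length_le hpre
        (by simpa [List.append_assoc] using List.prefix_append a ([R] ++ x)) h
    exact hRa (hxa.subset hRx)
  have hgxa : x[a.length]'hax = R := by
    have := hpre.getElem hax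
    rw [List.getElem_append_left (show a.length < (a ++ [R]).length by simp),
      List.getElem_append_right (le_refl a.length)] at this
    simpa using this
  have hgxb : x[b.length]'hbx = R := by
    have : x[b.length]'hbx = ((b ++ [R]) ++ y)[b.length]'(by simp) := by
      simp only [hx]
    rw [List.getElem_append_left (show b.length < (b ++ [R]).length by simp),
      List.getElem_append_right (le_refl b.length)] at this
    simpa using this
  have hfa : ∀ i (h : i < a.length), x[i]'(lt_trans h hax) ≠ R := by
    intro i h
    have hx' := hpre.getElem (lt_trans h hax)
    rw [List.getElem_append_left (show i < (a ++ [R]).length by simp; omega),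
      List.getElem_append_left h] at hx'
    intro hc
    exact hRa ((hx'.symm.trans hc) ▸ List.getElem_mem h)
  have hfb : ∀ i (h : i < b.length), x[i]'(lt_trans h hbx) ≠ R := by
    intro i h
    have hx' : x[i]'(lt_trans h hbx) = ((b ++ [R]) ++ y)[i]'(by simp; omega) := by
      simp only [hx]
    rw [List.getElem_append_left (show i < (b ++ [R]).length by simp; omega),
      List.getElem_append_left h] at hx'
    intro hc
    exact hRb ((hx'.symm.trans hc) ▸ List.getElem_mem h)
  have hlen : a.length = b.length := by
    rcases lt_trichotomy a.length b.length with h | h | h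
    · exact absurd hgxa (hfb _ h)
    · exact h
    · exact absurd hgxb (hfa _ h)
  refine List.ext_getElem hlen fun i h₁ h₂ => ?_
  have ha : x[i]'(lt_trans h₁ hax) = a[i] := by
    have := hpre.getElem (lt_trans h₁ hax)
    rwa [List.getElem_append_left (show i < (a ++ [R]).length by simp; omega),
      List.getElem_append_left h₁] at this
  have hb : x[i]'(lt_trans h₂ hbx) = b[i] := by
    have : x[i]'(lt_trans h₂ hbx) = ((b ++ [R]) ++ y)[i]'(by simp; omega) := by
      simp only [hx]
    rwa [List.getElem_append_left (show i < (b ++ [R]).length by simp; omega),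
      List.getElem_append_left h₂] at this
  rw [← ha, ← hb]

lemma core18 {σ : Type*} (p : List σ)
    (hD3 : ∀ (u v w : List σ) (R : σ), p = u ++ [R] ++ v ++ [R] ++ w →
      (u ++ [R] ++ v ++ [R] ++ w) <:+
        (u ++ [R] ++ v ++ [R] ++ v ++ [R] ++ w))
    (u v1 v2 w : List σ) (R : σ)
    (hp : p = u ++ [R] ++ v1 ++ [R] ++ v2 ++ [R] ++ w)
    (h1 : R ∉ v1) (h2 : R ∉ v2) : v1 = v2 := by
  set u' := u ++ [R] ++ v1 with hu'
  have hp' : p = u' ++ [R] ++ v2 ++ [R] ++ w := by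
    simp [hu', hp, List.append_assoc]
  obtain ⟨t, ht⟩ := hD3 u' v2 w R hp'
  have hcancel : t ++ (u' ++ [R]) = u' ++ [R] ++ v2 ++ [R] := by
    apply List.append_cancel_right (bs := v2 ++ [R] ++ w)
    simpa [List.append_assoc] using ht
  have hrev := congrArg List.reverse hcancel
  simp only [List.reverse_append, List.reverse_cons, List.reverse_nil,
    List.nil_append, List.append_assoc, List.reverse_singleton] at hrev
  have h2' := List.append_cancel_left hrev
  have hpre : u'.reverse <+: v2.reverse ++ [R] ++ u'.reverse :=
    ⟨t.reverse, by simpa [List.append_assoc] using h2'⟩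
  have hxeq : u'.reverse = v1.reverse ++ [R] ++ u.reverse := by
    simp [hu', List.append_assoc]
  have hab := keyLemma18 hpre hxeq (by simpa using h2) (by simpa using h1)
  have := congrArg List.reverse hab
  simpa using this.symm

/-- Let the characteristic prefix of a generalized path query `q` (containing
at least one constant `c`) be `(p)_c`, and let `q* = p·N` for a fresh relation
name `N ∉ p`. A homomorphism from `(uRvRw)_c` to `(uRvRvRw)_c` exists iff
`uRvRw` is a suffix of `uRvRvRw` (alignment at the constant `c` at the right
end); condition D3 is stated accordingly. If `q` satisfies D3, then:
(i) for every decomposition `p = u·R·v·R·w`, `u·R·v·R·w·N` is a suffix of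
`u·R·v·R·v·R·w·N` — hence `q* = p·N` satisfies C3; and
(ii) whenever `p = u·R·v1·R·v2·R·w` for consecutive occurrences of `R`,
`v1 = v2` — hence `q*` satisfies C2. -/
theorem stmt_18 {σ : Type*} (p : List σ) (N : σ) (hN : N ∉ p)
    (hD3 : ∀ (u v w : List σ) (R : σ), p = u ++ [R] ++ v ++ [R] ++ w →
      (u ++ [R] ++ v ++ [R] ++ w) <:+
        (u ++ [R] ++ v ++ [R] ++ v ++ [R] ++ w)) :
    ((∀ (u v w : List σ) (R : σ), p = u ++ [R] ++ v ++ [R] ++ w →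
        (u ++ [R] ++ v ++ [R] ++ w ++ [N]) <:+
          (u ++ [R] ++ v ++ [R] ++ v ++ [R] ++ w ++ [N])) ∧
      CondC3 (p ++ [N])) ∧
    ((∀ (u v1 v2 w : List σ) (R : σ),
        p = u ++ [R] ++ v1 ++ [R] ++ v2 ++ [R] ++ w → R ∉ v1 → R ∉ v2 →
        v1 = v2) ∧
      CondC2 (p ++ [N])) := by
  have hi : ∀ (u v w : List σ) (R : σ), p = u ++ [R] ++ v ++ [R] ++ w →
      (u ++ [R] ++ v ++ [R] ++ w ++ [N]) <:+
        (u ++ [R] ++ v ++ [R] ++ v ++ [R] ++ w ++ [N]) := by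
    intro u v w R hp
    obtain ⟨t, ht⟩ := hD3 u v w R hp
    exact ⟨t, by simpa [List.append_assoc] using congrArg (· ++ [N]) ht⟩
  have hc3 : CondC3 (p ++ [N]) := by
    intro a b c R heq
    rcases c.eq_nil_or_concat with rfl | ⟨c', x, rfl⟩
    · simp only [List.append_nil] at heq
      obtain ⟨h1, h2⟩ := List.append_inj' heq rfl
      have hNR : N = R := by simpa using h2
      subst hNR
      exact absurd (by simp [h1] : N ∈ p) hN
    · rw [List.concat_eq_append] at heq
      have heq' : p ++ [N] = (a ++ [R] ++ b ++ [R] ++ c') ++ [x] := by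
        rw [heq]; simp [List.append_assoc]
      obtain ⟨h1, h2⟩ := List.append_inj' heq' rfl
      have hx : N = x := by simpa using h2
      subst hx
      have := (hi a b c' R h1).isInfix
      rw [h1]
      simpa [List.append_assoc] using this
  have hii := core18 p hD3
  have hc2ii : CondC2ii (p ++ [N]) := by
    intro a b1 b2 c R heq hb1 hb2
    rcases c.eq_nil_or_concat with rfl | ⟨c', x, rfl⟩
    · simp only [List.append_nil] at heq
      obtain ⟨h1, h2⟩ := List.append_inj' heq rfl
      have hNR : N = R := by simpa using h2
      subst hNR
      exact absurd (by simp [h1] : N ∈ p) hN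
    · rw [List.concat_eq_append] at heq
      have heq' : p ++ [N] = (a ++ [R] ++ b1 ++ [R] ++ b2 ++ [R] ++ c') ++ [x] := by
        rw [heq]; simp [List.append_assoc]
      obtain ⟨h1, h2⟩ := List.append_inj' heq' rfl
      exact Or.inl (hii a b1 b2 c' R h1 hb1 hb2)
  exact ⟨⟨hi, hc3⟩, ⟨hii, ⟨hc3, hc2ii⟩⟩⟩
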